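/- arXiv:2005.09770 — 4 statements merged into one kernel-verified Lean document; each statement's English description precedes it below -/
import Mathlib

section
/- Let K = ℚ₂(√-1), with ring of integers 𝒪 and uniformizer π = 1 + √-1. Then the equation x₀⁶ + π x₁⁶ + π² x₂⁶ + π³ x₃⁶ + π⁴ x₄⁶ + π⁵ x₅⁶ = 0 has no solution (x₀,…,x₅) ∈ 𝒪⁶ other than the trivial one x₀ = ⋯ = x₅ = 0. -/
open Polynomial Finset

section Defs
variable {A : Type*} [CommRing A] [Algebra ℤ_[2] A]

/-- `x` belongs to the ring of integers `𝒪` (the integral closure of `ℤ₂`). -/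
def inO (x : A) : Prop := IsIntegral ℤ_[2] x

/-- `x` is divisible by `π ^ n` within the ring of integers, i.e. the normalized
valuation of `x` is at least `n`. -/
def pdvd (π : A) (n : ℕ) (x : A) : Prop := ∃ y : A, inO y ∧ x = π ^ n * y

/-- `x` is a unit of the ring of integers. -/
def isUnitO (x : A) : Prop := inO x ∧ ∃ y : A, inO y ∧ x * y = 1

/-- `π` is a uniformizer: a generator of the maximal ideal (= set of nonunits) of `𝒪`. -/
def IsUniformizerO (π : A) : Prop :=
  inO π ∧ ¬ isUnitO π ∧ ∀ x : A, inO x → ¬ isUnitO x → pdvd π 1 x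

/-- the normalized valuation of `a` equals `r`. -/
def hasVal (π : A) (r : ℕ) (a : A) : Prop := pdvd π r a ∧ ¬ pdvd π (r + 1) a

/-- `a` is at level `k` : its valuation is congruent to `k` mod `6`. -/
def atLevel (π : A) (k : ℕ) (a : A) : Prop := ∃ r : ℕ, r % 6 = k % 6 ∧ hasVal π r a

/-- `a` and `b` are both at level `k` and have the same `π`-coefficient. -/
def SameCoeff (π : A) (k : ℕ) (a b : A) : Prop :=
  ∃ (r s : ℕ) (u w : A), r % 6 = k % 6 ∧ s % 6 = k % 6 ∧ isUnitO u ∧ isUnitO w ∧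
    a = π ^ r * u ∧ b = π ^ s * w ∧ pdvd π 2 (u - w)

/-- `a` and `b` are both at level `k` and have different `π`-coefficients. -/
def DiffCoeff (π : A) (k : ℕ) (a b : A) : Prop :=
  ∃ (r s : ℕ) (u w : A), r % 6 = k % 6 ∧ s % 6 = k % 6 ∧ isUnitO u ∧ isUnitO w ∧
    a = π ^ r * u ∧ b = π ^ s * w ∧ ¬ pdvd π 2 (u - w)

end Defs

/-- `Kd d` is the quadratic extension `ℚ₂(√d)` of the `2`-adic numbers. -/
noncomputable abbrev Kd (d : ℚ_[2]) : Type := AdjoinRoot (X ^ 2 - C d)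

noncomputable instance (d : ℚ_[2]) : Algebra ℤ_[2] (Kd d) :=
  ((algebraMap ℚ_[2] (Kd d)).comp (algebraMap ℤ_[2] ℚ_[2])).toAlgebra

/-- the additive sextic form `∑ aᵢ xᵢ⁶` in seven variables has a nontrivial zero over `𝒪`. -/
def HasNontrivialZero {d : ℚ_[2]} (a : Fin 7 → Kd d) : Prop :=
  ∃ x : Fin 7 → Kd d, (∀ i, inO (x i)) ∧ x ≠ 0 ∧ ∑ i, a i * x i ^ 6 = 0

/-!
For `z = a + b√-1` put `absVal z = |a² + b²|₂`, the `2`-adic absolute value of the norm of `z`.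
It is multiplicative, and it is ultrametric because `max (|a|, |b|)² ≤ 2 |a² + b²|`: a square
in `ℤ₂` is `0` or `1` mod `4`, so `1 + t²` is never divisible by `4`. Its nonzero values are
powers of `2` and `absVal π = 1/2`, so the nonzero terms `πⁱ xᵢ⁶` have the pairwise distinct
values `2^-(i + 6 kᵢ)`. In an ultrametric sum that vanishes, the largest value occurs twice,
hence every term is zero.
-/

theorem Valuation.map_eq_zero_of_sum_eq_zero {R Γ₀ ι : Type*} [Ring R]
    [LinearOrderedCommGroupWithZero Γ₀] (v : Valuation R Γ₀) {s : Finset ι} {f : ι → R}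
    (hsum : ∑ i ∈ s, f i = 0)
    (hinj : ∀ i ∈ s, ∀ j ∈ s, v (f i) = v (f j) → v (f i) ≠ 0 → i = j)
    {i : ι} (hi : i ∈ s) : v (f i) = 0 := by
  classical
  obtain ⟨j, hj, hmax⟩ := s.exists_max_image (v ∘ f) ⟨i, hi⟩
  suffices v (f j) = 0 from le_antisymm (this ▸ hmax i hi) zero_le
  by_contra hne
  have hlt : ∀ k ∈ s.erase j, v (f k) < v (f j) := fun k hk =>
    (hmax k (mem_of_mem_erase hk)).lt_of_ne fun heq : v (f k) = v (f j) =>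
      ne_of_mem_erase hk (hinj k (mem_of_mem_erase hk) j hj heq (by rwa [heq]))
  have hfj : f j = -∑ k ∈ s.erase j, f k := by
    rw [eq_neg_iff_add_eq_zero, add_sum_erase s f hj, hsum]
  exact (v.map_sum_lt hne hlt).ne (by rw [hfj, v.map_neg])

namespace GaussianTwoAdic

local notation "𝕂" => Kd (-1)
local notation "𝐢" => AdjoinRoot.root (X ^ 2 - C (-1 : ℚ_[2]))

lemma two_inv_le_norm_one_add_sq (t : ℤ_[2]) : 2⁻¹ ≤ ‖1 + t ^ 2‖ := by
  by_contra! h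
  have h4 : ‖1 + t ^ 2‖ ≤ ((2 : ℕ) : ℝ) ^ (-(2 : ℕ) : ℤ) := by
    rw [PadicInt.norm_le_pow_iff_norm_lt_pow_add_one]
    refine h.trans_eq ?_
    norm_num
  rw [PadicInt.norm_le_pow_iff_mem_span_pow, ← PadicInt.ker_toZModPow, RingHom.mem_ker,
    map_add, map_one, map_pow] at h4
  generalize PadicInt.toZModPow 2 t = s at h4
  revert s
  decide

lemma norm_sq_le_of_norm_le {a b : ℚ_[2]} (hba : ‖b‖ ≤ ‖a‖) :
    ‖a‖ ^ 2 ≤ 2 * ‖a ^ 2 + b ^ 2‖ := by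
  rcases eq_or_ne a 0 with rfl | ha
  · simp
  have ht : ‖b / a‖ ≤ 1 := by
    rw [norm_div]
    exact div_le_one_of_le₀ hba (norm_nonneg a)
  have hk : 2⁻¹ ≤ ‖1 + (b / a) ^ 2‖ := two_inv_le_norm_one_add_sq ⟨b / a, ht⟩
  have hfact : a ^ 2 + b ^ 2 = a ^ 2 * (1 + (b / a) ^ 2) := by field_simp
  rw [hfact, norm_mul, norm_pow]
  nlinarith [sq_nonneg ‖a‖]

lemma max_norm_sq_le (a b : ℚ_[2]) : max ‖a‖ ‖b‖ ^ 2 ≤ 2 * ‖a ^ 2 + b ^ 2‖ := by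
  rcases le_total ‖b‖ ‖a‖ with h | h
  · rw [max_eq_left h]
    exact norm_sq_le_of_norm_le h
  · rw [max_eq_right h, add_comm]
    exact norm_sq_le_of_norm_le h

lemma norm_sq_add_sq_add_le (a b c d : ℚ_[2]) :
    ‖(a + c) ^ 2 + (b + d) ^ 2‖ ≤ max ‖a ^ 2 + b ^ 2‖ ‖c ^ 2 + d ^ 2‖ := by
  set m := max ‖a ^ 2 + b ^ 2‖ ‖c ^ 2 + d ^ 2‖
  have hcross : ‖2 * (a * c + b * d)‖ ≤ m := by
    have hac : ‖a * c + b * d‖ ≤ max ‖a‖ ‖b‖ * max ‖c‖ ‖d‖ := by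
      refine (Padic.nonarchimedean _ _).trans (max_le ?_ ?_) <;> rw [norm_mul]
      · exact mul_le_mul (le_max_left _ _) (le_max_left _ _) (norm_nonneg c)
          ((norm_nonneg a).trans (le_max_left _ _))
      · exact mul_le_mul (le_max_right _ _) (le_max_right _ _) (norm_nonneg d)
          ((norm_nonneg b).trans (le_max_right _ _))
    have h2 : ‖(2 : ℚ_[2])‖ = 2⁻¹ := by simpa using Padic.norm_p (p := 2)
    rw [norm_mul, h2]
    nlinarith [max_norm_sq_le a b, max_norm_sq_le c d, le_max_left ‖a ^ 2 + b ^ 2‖ ‖c ^ 2 + d ^ 2‖,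
      le_max_right ‖a ^ 2 + b ^ 2‖ ‖c ^ 2 + d ^ 2‖, sq_nonneg (max ‖a‖ ‖b‖ - max ‖c‖ ‖d‖),
      norm_nonneg (a * c + b * d)]
  have hsplit : (a + c) ^ 2 + (b + d) ^ 2 =
      (a ^ 2 + b ^ 2) + ((c ^ 2 + d ^ 2) + 2 * (a * c + b * d)) := by
    ring
  rw [hsplit]
  refine (Padic.nonarchimedean _ _).trans (max_le (le_max_left _ _) ?_)
  exact (Padic.nonarchimedean _ _).trans (max_le (le_max_right _ _) hcross)

lemma i_sq : (𝐢 : 𝕂) ^ 2 = -1 := by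
  have h := AdjoinRoot.eval₂_root (X ^ 2 - C (-1 : ℚ_[2]))
  simp only [eval₂_sub, eval₂_X_pow, eval₂_neg, eval₂_one, map_neg, map_one] at h
  linear_combination h

noncomputable def basis : Module.Basis (Fin 2) ℚ_[2] 𝕂 :=
  (AdjoinRoot.powerBasis' (monic_X_pow_sub_C (-1 : ℚ_[2]) two_ne_zero)).basis.reindex
    (finCongr natDegree_X_pow_sub_C)

lemma basis_apply (k : Fin 2) : basis k = 𝐢 ^ (k : ℕ) := by
  simp [basis, PowerBasis.coe_basis]
  rfl

noncomputable def re (z : 𝕂) : ℚ_[2] := basis.repr z 0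
noncomputable def im (z : 𝕂) : ℚ_[2] := basis.repr z 1

lemma re_add_im (z : 𝕂) : z = (re z : 𝕂) + (im z : 𝕂) * 𝐢 := by
  conv_lhs => rw [← basis.sum_repr z]
  simp [Fin.sum_univ_two, basis_apply, re, im, Algebra.smul_def]

lemma repr_mk (a b : ℚ_[2]) :
    basis.repr ((a : 𝕂) + (b : 𝕂) * 𝐢) = Finsupp.single 0 a + Finsupp.single 1 b := by
  have h : (a : 𝕂) + (b : 𝕂) * 𝐢 = a • basis 0 + b • basis 1 := by
    simp [basis_apply, Algebra.smul_def]
  simp [h]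

@[simp] lemma re_mk (a b : ℚ_[2]) : re ((a : 𝕂) + (b : 𝕂) * 𝐢) = a := by
  simp [re, repr_mk]

@[simp] lemma im_mk (a b : ℚ_[2]) : im ((a : 𝕂) + (b : 𝕂) * 𝐢) = b := by
  simp [im, repr_mk]

@[simp] lemma re_one : re 1 = 1 := by simpa using re_mk 1 0
@[simp] lemma im_one : im 1 = 0 := by simpa using im_mk 1 0

lemma re_add (y z : 𝕂) : re (y + z) = re y + re z := by simp [re]
lemma im_add (y z : 𝕂) : im (y + z) = im y + im z := by simp [im]

lemma mul_eq_re_add_im (y z : 𝕂) :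
    y * z = ((re y * re z - im y * im z : ℚ_[2]) : 𝕂) +
      ((re y * im z + im y * re z : ℚ_[2]) : 𝕂) * 𝐢 := by
  conv_lhs => rw [re_add_im y, re_add_im z]
  simp only [map_sub, map_add, map_mul]
  linear_combination (↑(im y) * ↑(im z) : 𝕂) * i_sq

noncomputable def normSq (z : 𝕂) : ℚ_[2] := re z ^ 2 + im z ^ 2

lemma normSq_mul (y z : 𝕂) : normSq (y * z) = normSq y * normSq z := by
  simp only [normSq, mul_eq_re_add_im y z, re_mk, im_mk]
  ring

lemma eq_zero_of_normSq_eq_zero {z : 𝕂} (hz : normSq z = 0) : z = 0 := by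
  have h := max_norm_sq_le (re z) (im z)
  rw [← normSq, hz, norm_zero, mul_zero] at h
  have hre : ‖re z‖ = 0 := by nlinarith [le_max_left ‖re z‖ ‖im z‖, norm_nonneg (re z)]
  have him : ‖im z‖ = 0 := by nlinarith [le_max_right ‖re z‖ ‖im z‖, norm_nonneg (im z)]
  rw [re_add_im z, norm_eq_zero.mp hre, norm_eq_zero.mp him]
  simp

noncomputable def absVal : Valuation 𝕂 NNReal where
  toFun z := ‖normSq z‖₊
  map_zero' := by simp [normSq, re, im]
  map_one' := by simp [normSq]
  map_mul' y z := by simp [normSq_mul]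
  map_add_le_max' y z := by
    rw [← NNReal.coe_le_coe, NNReal.coe_max]
    simpa [normSq, re_add, im_add] using norm_sq_add_sq_add_le (re y) (im y) (re z) (im z)

@[simp] lemma absVal_eq_zero {z : 𝕂} : absVal z = 0 ↔ z = 0 :=
  ⟨fun h => eq_zero_of_normSq_eq_zero (nnnorm_eq_zero.mp h), fun h => h ▸ absVal.map_zero⟩

lemma absVal_one_add_i : absVal (1 + 𝐢) = 2⁻¹ := by
  have h : (1 + 𝐢 : 𝕂) = ((1 : ℚ_[2]) : 𝕂) + ((1 : ℚ_[2]) : 𝕂) * 𝐢 := by simp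
  rw [← NNReal.coe_inj]
  change ‖normSq (1 + 𝐢)‖ = _
  rw [h, normSq, re_mk, im_mk]
  simpa [one_add_one_eq_two] using Padic.norm_p (p := 2)

lemma absVal_eq_zpow {z : 𝕂} (hz : z ≠ 0) : (absVal z : ℝ) = 2 ^ (-(normSq z).valuation) := by
  exact_mod_cast Padic.norm_eq_zpow_neg_valuation (p := 2) (mt eq_zero_of_normSq_eq_zero hz)

lemma absVal_one_add_i_pow_mul_pow_six {x : 𝕂} (hx : x ≠ 0) (i : ℕ) :
    (absVal ((1 + 𝐢) ^ i * x ^ 6) : ℝ) = 2 ^ (-(i + 6 * (normSq x).valuation)) := by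
  rw [map_mul, map_pow, map_pow, absVal_one_add_i, NNReal.coe_mul, NNReal.coe_pow, NNReal.coe_pow,
    absVal_eq_zpow hx, NNReal.coe_inv, NNReal.coe_ofNat,
    show -(i + 6 * (normSq x).valuation) = -1 * (i : ℤ) + -(normSq x).valuation * (6 : ℕ) by ring,
    zpow_add₀ two_ne_zero, zpow_mul, zpow_mul, zpow_natCast, zpow_natCast, zpow_neg_one]

lemma eq_of_absVal_one_add_i_pow_mul_pow_six_eq {i j : Fin 6} {x y : 𝕂}
    (h : absVal ((1 + 𝐢) ^ (i : ℕ) * x ^ 6) = absVal ((1 + 𝐢) ^ (j : ℕ) * y ^ 6))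
    (h0 : absVal ((1 + 𝐢) ^ (i : ℕ) * x ^ 6) ≠ 0) : i = j := by
  have hx : x ≠ 0 := by rintro rfl; simp at h0
  have hy : y ≠ 0 := by rintro rfl; simp [h] at h0
  have hval := congrArg (fun r : NNReal => (r : ℝ)) h
  simp only [absVal_one_add_i_pow_mul_pow_six hx, absVal_one_add_i_pow_mul_pow_six hy] at hval
  have hexp := zpow_right_injective₀ two_pos one_lt_two.ne' hval
  have := i.isLt
  have := j.isLt
  ext
  omega

end GaussianTwoAdic

open GaussianTwoAdic

theorem stmt0_general (x : Fin 6 → Kd (-1))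
    (h : ∑ i : Fin 6,
      (1 + AdjoinRoot.root (X ^ 2 - C (-1 : ℚ_[2]))) ^ (i : ℕ) * x i ^ 6 = 0) :
    x = 0 := by
  funext i
  have hi := absVal.map_eq_zero_of_sum_eq_zero h
    (fun _ _ _ _ => eq_of_absVal_one_add_i_pow_mul_pow_six_eq) (mem_univ i)
  simpa [absVal_one_add_i] using hi

/-- The form `x₀⁶ + π x₁⁶ + ⋯ + π⁵ x₅⁶` with `π = 1 + √-1` has only the trivial
zero over the ring of integers of `ℚ₂(√-1)`. -/
theorem stmt0 (x : Fin 6 → Kd (-1)) (hx : ∀ i, inO (x i))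
    (h : ∑ i : Fin 6,
      (1 + AdjoinRoot.root (X ^ 2 - C (-1 : ℚ_[2]))) ^ (i : ℕ) * x i ^ 6 = 0) :
    x = 0 :=
  stmt0_general x h
end

section
/- Let K be a finite extension of ℚ₂ with ring of integers 𝒪, maximal ideal generated by a uniformizer π, and ramification index e = 2 (so that v(2) = 2, where v is the normalized valuation with v(π) = 1). Let a₁,…,a₇ ∈ 𝒪. If there exists a solution modulo π^{h+5} of ∑ᵢ aᵢxᵢ⁶ ≡ 0 in which some variable xᵢ with v(aᵢ) = h takes a unit value, then ∑ᵢ aᵢxᵢ⁶ = 0 has a nontrivial solution in 𝒪. -/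
open Polynomial Finset

set_option linter.unusedSectionVars false
set_option linter.unusedVariables false

section AdicTransfer
open Module
variable {R O : Type*} [CommRing R] [CommRing O] [Algebra R O]
    [Module.Finite R O] [Module.Free R O] (r : R)

private lemma mem_span_pow_iff_dvd {n : ℕ} {a : R} :
    a ∈ (Ideal.span {r} ^ n • ⊤ : Ideal R) ↔ r ^ n ∣ a := by
  rw [← Ideal.one_eq_top, Ideal.smul_eq_mul, mul_one, Ideal.span_singleton_pow,
    Ideal.mem_span_singleton]

private lemma mem_span_pow_iff_coord {n : ℕ} {x : O} :
    x ∈ (Ideal.span {algebraMap R O r} ^ n • ⊤ : Ideal O) ↔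
      ∀ i, r ^ n ∣ (Free.chooseBasis R O).repr x i := by
  rw [← Ideal.one_eq_top, Ideal.smul_eq_mul, mul_one, Ideal.span_singleton_pow,
    Ideal.mem_span_singleton']
  constructor
  · rintro ⟨y, rfl⟩ i
    have : y * algebraMap R O r ^ n = r ^ n • y := by
      rw [Algebra.smul_def, map_pow]; ring
    rw [this, map_smul]
    exact ⟨(Free.chooseBasis R O).repr y i, by simp [Algebra.smul_def, mul_comm]⟩
  · intro hdvd
    choose c hc using hdvd
    refine ⟨(Free.chooseBasis R O).repr.symm (Finsupp.equivFunOnFinite.symm c), ?_⟩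
    set b := Free.chooseBasis R O
    have : b.repr.symm (Finsupp.equivFunOnFinite.symm c) * algebraMap R O r ^ n
        = r ^ n • b.repr.symm (Finsupp.equivFunOnFinite.symm c) := by
      rw [Algebra.smul_def, map_pow]; ring
    rw [this]
    apply b.repr.injective
    rw [map_smul]
    ext i
    simp only [Finsupp.coe_smul, Pi.smul_apply, LinearEquiv.apply_symm_apply, smul_eq_mul]
    rw [hc i]
    simp [Finsupp.equivFunOnFinite]
    rfl

theorem isAdicComplete_of_finite_free (h : IsAdicComplete (Ideal.span {r}) R) :
    IsAdicComplete (Ideal.span {algebraMap R O r}) O := by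
  set b := Free.chooseBasis R O
  refine { haus' := ?_, prec' := ?_ }
  · intro x hx
    apply b.repr.injective
    ext i
    simp only [map_zero, Finsupp.coe_zero, Pi.zero_apply]
    refine h.toIsHausdorff.haus (b.repr x i) fun n => ?_
    rw [SModEq.zero, mem_span_pow_iff_dvd]
    exact (mem_span_pow_iff_coord r).mp ((SModEq.zero).mp (hx n)) i
  · intro f hf
    have hcoord : ∀ i, ∃ L : R, ∀ n,
        b.repr (f n) i ≡ L [SMOD (Ideal.span {r} ^ n • ⊤ : Ideal R)] := by
      intro i
      refine h.toIsPrecomplete.prec (f := fun n => b.repr (f n) i) ?_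
      intro m n hmn
      rw [SModEq.sub_mem, mem_span_pow_iff_dvd]
      have := (SModEq.sub_mem).mp (hf hmn)
      rw [mem_span_pow_iff_coord r] at this
      simpa [sub_eq_add_neg] using this i
    choose L hL using hcoord
    refine ⟨b.repr.symm (Finsupp.equivFunOnFinite.symm L), fun n => ?_⟩
    rw [SModEq.sub_mem, mem_span_pow_iff_coord r]
    intro i
    have := (SModEq.sub_mem).mp (hL i n)
    rw [mem_span_pow_iff_dvd] at this
    rw [map_sub, LinearEquiv.apply_symm_apply]
    simpa [sub_eq_add_neg] using this

end AdicTransfer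

section HenselSteps
variable (O : Type*) [CommRing O] [Nontrivial O] (I : Ideal O)

lemma hensel_sq (hI : I = Ideal.span {(2:O)}) [hH : HenselianRing O I]
    (c : O) (hc2 : (2:O) ∣ c ^ 2) : ∃ z : O, z ^ 2 + z = c := by
  have h2I : (2:O) ∈ I := hI ▸ Ideal.mem_span_singleton_self _
  have hmonic : (X ^ 2 + (X - C c) : O[X]).Monic := by
    apply monic_X_pow_add
    rw [degree_X_sub_C]; decide
  have hev : (X ^ 2 + (X - C c) : O[X]).derivative.eval c = 2 * c + 1 := by
    simp; ring
  obtain ⟨z, hz, -⟩ := hH.is_henselian (X ^ 2 + (X - C c)) hmonic c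
    (by simpa using (hI ▸ Ideal.mem_span_singleton.mpr hc2 : c^2 ∈ I))
    (by
      rw [hev]
      have : (Ideal.Quotient.mk I) (2 * c + 1) = 1 := by
        rw [← map_one (Ideal.Quotient.mk I), Ideal.Quotient.eq]
        simpa using Ideal.mul_mem_right c _ h2I
      rw [this]; exact isUnit_one)
  refine ⟨z, ?_⟩
  have h0 : z ^ 2 + (z - c) = 0 := by simpa using hz
  linear_combination h0

lemma hensel_cube (hI : I = Ideal.span {(2:O)}) [hH : HenselianRing O I]
    (z : O) : ∃ t : O, t ^ 3 = 1 + 2 * z := by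
  have h2I : (2:O) ∈ I := hI ▸ Ideal.mem_span_singleton_self _
  have hev : (X ^ 3 - C (1 + 2*z) : O[X]).derivative.eval 1 = 3 := by
    simp; norm_num
  obtain ⟨t, ht, -⟩ := hH.is_henselian (X ^ 3 - C (1 + 2*z))
    (monic_X_pow_sub_C _ (by norm_num)) 1
    (by
      have : (X ^ 3 - C (1 + 2*z) : O[X]).eval 1 = 2 * (-z) := by simp
      rw [this]
      exact hI ▸ Ideal.mem_span_singleton.mpr ⟨-z, rfl⟩)
    (by
      rw [hev]
      have : (Ideal.Quotient.mk I) (3 : O) = 1 := by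
        rw [← map_one (Ideal.Quotient.mk I), Ideal.Quotient.eq]
        have h31 : (3:O) - 1 = 2 := by norm_num
        rw [h31]; exact h2I
      rw [this]; exact isUnit_one)
  refine ⟨t, ?_⟩
  have h0 : t ^ 3 - (1 + 2*z) = 0 := by simpa using ht
  linear_combination h0

end HenselSteps


lemma unit_of_hasVal {K : Type*} [Field K] [Algebra ℤ_[2] K] (π : K)
    (hπ : IsUniformizerO π) {r : ℕ} {aa : K} (hV : hasVal π r aa) :
    ∃ u, inO u ∧ (∃ u', inO u' ∧ u * u' = 1) ∧ aa = π ^ r * u := by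
  obtain ⟨u, huO, hueq⟩ := hV.1
  refine ⟨u, huO, ?_, hueq⟩
  by_contra hne
  have hnu : ¬ isUnitO u := fun h => hne h.2
  obtain ⟨u', hu'O, hu'eq⟩ := hπ.2.2 u huO hnu
  exact hV.2 ⟨u', hu'O, by rw [hueq, hu'eq]; ring⟩



/-- Hensel's lemma criterion: over a finite extension of `ℚ₂` with `e = 2`
(so `v(2) = 2`), a zero of `∑ aᵢxᵢ⁶` modulo `π^(h+5)` in which a variable whose
coefficient has valuation `h` takes a unit value lifts to an exact nontrivial zero. -/
theorem stmt1 (K : Type*) [Field K] [Algebra ℚ_[2] K] [FiniteDimensional ℚ_[2] K]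
    [Algebra ℤ_[2] K] [IsScalarTower ℤ_[2] ℚ_[2] K]
    (π : K) (hπ : IsUniformizerO π) (h2 : hasVal π 2 (2 : K))
    (a : Fin 7 → K) (ha : ∀ i, inO (a i))
    (h : ∃ (x : Fin 7 → K) (i : Fin 7) (hlev : ℕ), (∀ j, inO (x j)) ∧ isUnitO (x i) ∧
      hasVal π hlev (a i) ∧ pdvd π (hlev + 5) (∑ j, a j * x j ^ 6)) :
    ∃ x : Fin 7 → K, (∀ i, inO (x i)) ∧ x ≠ 0 ∧ ∑ i, a i * x i ^ 6 = 0 := by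
  classical
  obtain ⟨x, i, hlev, hxint, hxiu, hai, hS⟩ := h
  haveI : CharZero K := charZero_of_injective_algebraMap (algebraMap ℚ_[2] K).injective
  haveI : NoZeroSMulDivisors ℤ_[2] K := by
    refine (show Function.Injective (algebraMap ℤ_[2] K) → NoZeroSMulDivisors ℤ_[2] K from fun hinj => ⟨fun {c x} hcx => by rw [Algebra.smul_def, mul_eq_zero, (injective_iff_map_eq_zero' _).mp hinj] at hcx; exact hcx⟩) ?_
    rw [IsScalarTower.algebraMap_eq ℤ_[2] ℚ_[2] K]
    exact (algebraMap ℚ_[2] K).injective.comp (IsFractionRing.injective _ _)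
  haveI : Module.Finite ℤ_[2] ↥(integralClosure ℤ_[2] K) :=
    IsIntegralClosure.finite ℤ_[2] ℚ_[2] K (integralClosure ℤ_[2] K)
  haveI : Module.Free ℤ_[2] ↥(integralClosure ℤ_[2] K) :=
    IsIntegralClosure.module_free ℤ_[2] ℚ_[2] K (integralClosure ℤ_[2] K)
  have hACZ : IsAdicComplete (Ideal.span {(2 : ℤ_[2])}) ℤ_[2] := by
    have h22 : ((2:ℕ) : ℤ_[2]) = (2 : ℤ_[2]) := by norm_num
    rw [← h22, ← PadicInt.maximalIdeal_eq_span_p]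
    infer_instance
  have hAC := isAdicComplete_of_finite_free (O := ↥(integralClosure ℤ_[2] K)) (2:ℤ_[2]) hACZ
  have hmap2 : algebraMap ℤ_[2] ↥(integralClosure ℤ_[2] K) (2 : ℤ_[2])
      = (2 : ↥(integralClosure ℤ_[2] K)) := map_ofNat _ 2
  rw [hmap2] at hAC
  haveI := hAC
  haveI hH : HenselianRing ↥(integralClosure ℤ_[2] K)
      (Ideal.span {(2 : ↥(integralClosure ℤ_[2] K))}) := IsAdicComplete.henselianRing _ _
  -- extract data
  obtain ⟨u, huO, ⟨uinv, huinvO, huu⟩, haieq⟩ := unit_of_hasVal π hπ hai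
  obtain ⟨w, hwO, ⟨winv, hwinvO, hww⟩, h2eq⟩ := unit_of_hasVal π hπ h2
  obtain ⟨xinv, hxinvO, hxx⟩ := hxiu.2
  obtain ⟨y, hyO, hSeq⟩ := hS
  have hπI : IsIntegral ℤ_[2] π := hπ.1
  have hQO : IsIntegral ℤ_[2] (y * uinv * xinv ^ 6 * winv ^ 2) :=
    ((hyO.mul huinvO).mul (hxinvO.pow 6)).mul (hwinvO.pow 2)
  -- the element c of O
  set cK : K := -(π * (y * uinv * xinv ^ 6 * winv ^ 2)) with hcK
  have hcO : IsIntegral ℤ_[2] cK := (hπI.mul hQO).neg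
  have hc2 : (2 : ↥(integralClosure ℤ_[2] K)) ∣ (⟨cK, hcO⟩ : ↥(integralClosure ℤ_[2] K)) ^ 2 := by
    refine ⟨⟨winv * (y * uinv * xinv ^ 6 * winv ^ 2) ^ 2, hwinvO.mul (hQO.pow 2)⟩, ?_⟩
    apply Subtype.ext
    push_cast
    simp only [show ((2 : ↥(integralClosure ℤ_[2] K)) : K) = 2 from rfl]
    rw [hcK]
    linear_combination (-(winv * (y * uinv * xinv ^ 6 * winv ^ 2) ^ 2)) * h2eq +
      (-(π^2 * (y * uinv * xinv ^ 6 * winv ^ 2) ^ 2)) * hww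
  obtain ⟨z, hz⟩ := hensel_sq ↥(integralClosure ℤ_[2] K) _ rfl ⟨cK, hcO⟩ hc2
  obtain ⟨t, ht⟩ := hensel_cube ↥(integralClosure ℤ_[2] K) _ rfl z
  -- K-level versions
  have hzK : (z:K)^2 + (z:K) = cK := by
    have hh := congrArg Subtype.val hz
    push_cast at hh
    exact hh
  have htK : (t:K)^3 = 1 + 2*(z:K) := by
    have hh := congrArg Subtype.val ht
    push_cast at hh
    exact hh
  have hxne : x i ≠ 0 := left_ne_zero_of_mul_eq_one hxx
  have htne : (t:K) ≠ 0 := by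
    intro h0
    apply hπ.2.1
    refine ⟨hπ.1, π * w * (-(z:K)), (hπI.mul hwO).mul (z.2.neg), ?_⟩
    rw [h0] at htK
    have h1 : (2:K) * (-(z:K)) = 1 := by linear_combination htK
    linear_combination h1 + (z:K) * h2eq
  refine ⟨Function.update x i (x i * (t:K)), ?_, ?_, ?_⟩
  · intro j
    rcases eq_or_ne j i with rfl | hne
    · rw [Function.update_self]; exact (hxiu.1).mul t.2
    · rw [Function.update_of_ne hne]; exact hxint j
  · intro h0
    have hcf := congrFun h0 i
    rw [Function.update_self] at hcf
    exact (mul_ne_zero hxne htne) (by simpa using hcf)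
  · have hsum : ∑ j, a j * (Function.update x i (x i * (t:K)) j) ^ 6
        = π^(hlev+5)*y + (a i * (x i * (t:K))^6 - a i * x i ^ 6) := by
      have h1 : ∀ j : Fin 7, a j * (Function.update x i (x i * (t:K)) j) ^ 6
          = a j * x j ^ 6 + (if j = i then a i * (x i * (t:K))^6 - a i * x i ^ 6 else 0) := by
        intro j
        rcases eq_or_ne j i with rfl | hne
        · rw [Function.update_self, if_pos rfl]; ring
        · rw [Function.update_of_ne hne, if_neg hne]; ring
      rw [Finset.sum_congr rfl (fun j _ => h1 j), Finset.sum_add_distrib,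
        Finset.sum_ite_eq' univ i, if_pos (Finset.mem_univ i), hSeq]
    rw [hsum, haieq, pow_add]
    have hxx6 : (x i * xinv)^6 = 1 := by rw [hxx]; norm_num
    have hww2 : (w * winv)^2 = 1 := by rw [hww]; norm_num
    linear_combination
      (π^hlev*u*(x i)^6*((t:K)^3+1+2*(z:K))) * htK
      + (4*π^hlev*u*(x i)^6) * hzK
      + (-(π^hlev*u*(x i)^6*π*(y * uinv * xinv ^ 6 * winv ^ 2)*(2+π^2*w))) * h2eq
      + (-(π^hlev*π^5*y*(x i*xinv)^6*(w*winv)^2)) * huu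
      + (-(π^hlev*π^5*y*(w*winv)^2)) * hxx6
      + (-(π^hlev*π^5*y)) * hww2
end

section
/- Let K ∈ {ℚ₂(√-1), ℚ₂(√-5)} with ring of integers 𝒪 and uniformizer π, and let v be the normalized valuation. Suppose u, w ∈ 𝒪 are units with u ≢ w (mod π²) (same level, different π-coefficients). Then for each choice ε ∈ {0,1} there exist α, β ∈ 𝒪, not both divisible by π, such that uα⁶ + wβ⁶ = π·t where t is a unit whose π-coefficient equals ε. -/
open Polynomial Finset

/-!
For `D ≡ 3 mod 4` the integers of `ℚ₂(√D)` are `ℤ₂[√D]`, and `(1 + √D)² = 2v` with `v` a unit,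
so every uniformizer `π` divides `1 + √D`, the residue field is `𝔽₂` and `π² ∣ 2`.
In any such local ring the contraction is elementary: with `u = 1 + πa`, `w = 1 + πb` and
`a ≢ b`, one gets `u + w = π(1 + πm)`. If the `π`-coefficient of `1 + πm` is the wrong one,
replacing `α = 1` by `α = 1 + π` adds `u((1 + π)⁶ - 1) ≡ π² (mod π³)` to the sum, which flips it.
-/

namespace PadicInt

@[simp, norm_cast]
theorem coe_ofNat {p : ℕ} [Fact p.Prime] (n : ℕ) [n.AtLeastTwo] :
    ((ofNat(n) : ℤ_[p]) : ℚ_[p]) = ofNat(n) :=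
  map_ofNat Coe.ringHom n

theorem two_pow_dvd_iff (n : ℕ) (y : ℤ_[2]) :
    (2 : ℤ_[2]) ^ n ∣ y ↔ toZModPow n y = 0 := by
  rw [← RingHom.mem_ker, ker_toZModPow, Ideal.mem_span_singleton, Nat.cast_ofNat]

theorem two_dvd_or_two_dvd_sub_one (y : ℤ_[2]) : 2 ∣ y ∨ 2 ∣ y - 1 := by
  rw [← pow_one (2 : ℤ_[2]), two_pow_dvd_iff, two_pow_dvd_iff, map_sub, map_one]
  generalize toZModPow 1 y = a
  revert a; decide

theorem not_two_dvd_one : ¬ (2 : ℤ_[2]) ∣ 1 := by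
  rw [← pow_one (2 : ℤ_[2]), two_pow_dvd_iff, map_one]; decide

theorem isUnit_of_not_two_dvd {y : ℤ_[2]} (h : ¬ 2 ∣ y) : IsUnit y := by
  by_contra hy
  exact h (by simpa using (norm_lt_one_iff_dvd y).1 (not_isUnit_iff.1 hy))

theorem two_dvd_of_four_dvd_sq_sub_mul_sq {D A B : ℤ_[2]} (hD : 4 ∣ D + 1)
    (h : 4 ∣ A ^ 2 - D * B ^ 2) : 2 ∣ A ∧ 2 ∣ B := by
  have two_dvd_iff (y : ℤ_[2]) : 2 ∣ y ↔ 2 * toZModPow 2 y = 0 := by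
    rw [← mul_dvd_mul_iff_left (two_ne_zero' ℤ_[2]), ← sq, two_pow_dvd_iff, map_mul, map_ofNat]
  rw [show (4 : ℤ_[2]) = 2 ^ 2 by norm_num, two_pow_dvd_iff] at hD h
  rw [two_dvd_iff, two_dvd_iff]
  simp only [map_add, map_sub, map_mul, map_pow, map_one] at hD h
  generalize toZModPow 2 A = a, toZModPow 2 B = b, toZModPow 2 D = d at *
  revert a b d; decide

end PadicInt

open PadicInt

section Contraction

variable {R : Type*} [CommRing R] {π : R}

theorem dvd_sub_one_of_isUnit (hπ : ¬ IsUnit π) (hres : ∀ x, π ∣ x ∨ π ∣ x - 1) {u : R}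
    (hu : IsUnit u) : π ∣ u - 1 :=
  (hres u).resolve_left fun h => hπ (isUnit_of_dvd_unit h hu)

theorem isUnit_of_dvd_sub_one (hπ : ¬ IsUnit π) (hmax : ∀ x, ¬ IsUnit x → π ∣ x) {t : R}
    (ht : π ∣ t - 1) : IsUnit t := by
  by_contra h
  exact hπ (isUnit_of_dvd_one (by simpa using dvd_sub (hmax t h) ht))

theorem exists_one_add_pow_six_sub_one (h2 : π ^ 2 ∣ 2) :
    ∃ r, (1 + π) ^ 6 - 1 = π ^ 2 * (1 + π * r) := by
  obtain ⟨ι, hι⟩ := h2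
  exact ⟨3 * ι + 7 * ι * π + 20 + 15 * π + 6 * π ^ 2 + π ^ 3,
    by linear_combination (3 * π + 7 * π ^ 2) * hι⟩

theorem exists_add_eq_mul_one_add (hπ : ¬ IsUnit π) (hres : ∀ x, π ∣ x ∨ π ∣ x - 1)
    (h2 : π ^ 2 ∣ 2) {u w : R} (hu : IsUnit u) (hw : IsUnit w) (huw : ¬ π ^ 2 ∣ u - w) :
    ∃ m, u + w = π * (1 + π * m) := by
  obtain ⟨a, ha⟩ := dvd_sub_one_of_isUnit hπ hres hu
  obtain ⟨b, hb⟩ := dvd_sub_one_of_isUnit hπ hres hw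
  obtain ⟨s, hs⟩ : π ∣ a - b - 1 := (hres (a - b)).resolve_left fun ⟨c, hc⟩ =>
    huw ⟨c, by linear_combination ha - hb + π * hc⟩
  obtain ⟨ι, hι⟩ := h2
  exact ⟨s + ι * w, by linear_combination ha - hb + π * hs + w * hι⟩

theorem exists_contraction (hπ : ¬ IsUnit π) (hmax : ∀ x, ¬ IsUnit x → π ∣ x)
    (hres : ∀ x, π ∣ x ∨ π ∣ x - 1) (h2 : π ^ 2 ∣ 2) {u w : R} (hu : IsUnit u) (hw : IsUnit w)
    (huw : ¬ π ^ 2 ∣ u - w) (e : R) :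
    ∃ α β t : R, ¬ (π ∣ α ∧ π ∣ β) ∧ IsUnit t ∧ u * α ^ 6 + w * β ^ 6 = π * t ∧
      π ^ 2 ∣ t - (1 + e * π) := by
  have hπ1 : ¬ π ∣ 1 := fun h => hπ (isUnit_of_dvd_one h)
  suffices ∃ α β t : R, ¬ (π ∣ α ∧ π ∣ β) ∧ u * α ^ 6 + w * β ^ 6 = π * t ∧
      π ^ 2 ∣ t - (1 + e * π) by
    obtain ⟨α, β, t, hαβ, heq, ht⟩ := this
    refine ⟨α, β, t, hαβ, isUnit_of_dvd_sub_one hπ hmax ?_, heq, ht⟩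
    have h := dvd_add ((dvd_pow_self π two_ne_zero).trans ht) (dvd_mul_left π e)
    rwa [sub_add_eq_sub_sub, sub_add_cancel] at h
  obtain ⟨m, hm⟩ := exists_add_eq_mul_one_add hπ hres h2 hu hw huw
  rcases hres (m - e) with ⟨c, hc⟩ | ⟨c, hc⟩
  · exact ⟨1, 1, 1 + π * m, fun h => hπ1 h.1, by linear_combination hm,
      ⟨c, by linear_combination π * hc⟩⟩
  -- replacing `α = 1` by `1 + π` adds `π` to `t` modulo `π²`, and `2π ≡ 0`
  obtain ⟨r, hr⟩ := exists_one_add_pow_six_sub_one h2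
  obtain ⟨a, ha⟩ := dvd_sub_one_of_isUnit hπ hres hu
  obtain ⟨ι, hι⟩ := h2
  exact ⟨1 + π, 1, 1 + π * m + π * u * (1 + π * r), fun h => hπ1 h.2,
    by linear_combination hm + u * hr,
    ⟨c + a + u * r + π * ι, by linear_combination π * hc + π * ha + π * hι⟩⟩

end Contraction

section IntegralClosure

variable {A : Type*} [CommRing A] [Algebra ℤ_[2] A]

theorem pdvd_coe_iff {π x : integralClosure ℤ_[2] A} {n : ℕ} :
    pdvd (π : A) n x ↔ π ^ n ∣ x := by
  constructor
  · rintro ⟨y, hy, h⟩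
    exact ⟨⟨y, hy⟩, Subtype.ext (by simpa using h)⟩
  · rintro ⟨y, rfl⟩
    exact ⟨y, y.2, by simp⟩

theorem isUnitO_coe_iff {x : integralClosure ℤ_[2] A} : isUnitO (x : A) ↔ IsUnit x := by
  rw [isUnit_iff_exists_inv]
  constructor
  · rintro ⟨-, y, hy, h⟩
    exact ⟨⟨y, hy⟩, Subtype.ext (by simpa using h)⟩
  · rintro ⟨y, h⟩
    exact ⟨x.2, y, y.2, by simpa using congrArg Subtype.val h⟩

theorem IsUniformizerO.of_coe {π : integralClosure ℤ_[2] A} (hπ : IsUniformizerO (π : A)) :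
    ¬ IsUnit π ∧ ∀ x, ¬ IsUnit x → π ∣ x :=
  ⟨isUnitO_coe_iff.not.1 hπ.2.1, fun x hx =>
    by simpa [pdvd_coe_iff] using hπ.2.2 x x.2 (isUnitO_coe_iff.not.2 hx)⟩

end IntegralClosure

namespace Kd

variable {d : ℚ_[2]}

instance : Nontrivial (Kd d) :=
  AdjoinRoot.nontrivial _ (by rw [degree_X_pow_sub_C two_pos]; decide)

variable (d) in
noncomputable def sqrtd : Kd d := AdjoinRoot.root _

theorem sqrtd_sq : sqrtd d ^ 2 = algebraMap ℚ_[2] (Kd d) d := by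
  have h := AdjoinRoot.eval₂_root (X ^ 2 - C d)
  rw [eval₂_sub, eval₂_X_pow, eval₂_C, sub_eq_zero] at h
  exact h

theorem exists_eq_add_mul_sqrtd (x : Kd d) :
    ∃ a b : ℚ_[2], x = algebraMap ℚ_[2] (Kd d) a + algebraMap ℚ_[2] (Kd d) b * sqrtd d := by
  obtain ⟨p, rfl⟩ := AdjoinRoot.mk_surjective x
  have hmonic : (X ^ 2 - C d).Monic := monic_X_pow_sub_C d two_ne_zero
  rw [← AdjoinRoot.mk_leftInverse hmonic (AdjoinRoot.mk _ p), AdjoinRoot.modByMonicHom_mk]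
  set g := p %ₘ (X ^ 2 - C d)
  have hdeg : g.degree ≤ 1 := by
    have := degree_modByMonic_lt p hmonic
    rw [degree_X_pow_sub_C two_pos] at this
    exact Order.le_of_lt_succ this
  refine ⟨g.coeff 0, g.coeff 1, ?_⟩
  conv_lhs => rw [eq_X_add_C_of_degree_le_one hdeg]
  rw [map_add, map_mul, AdjoinRoot.mk_X, AdjoinRoot.mk_C, AdjoinRoot.mk_C,
    AdjoinRoot.algebraMap_eq, sqrtd]
  ring

variable (d) in
noncomputable def conj : Kd d →ₐ[ℚ_[2]] Kd d :=
  AdjoinRoot.liftAlgHom _ (Algebra.ofId ℚ_[2] (Kd d)) (-sqrtd d) (by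
    rw [eval₂_sub, eval₂_X_pow, eval₂_C, neg_sq, sqrtd_sq, sub_eq_zero]; rfl)

theorem conj_sqrtd : conj d (sqrtd d) = -sqrtd d :=
  AdjoinRoot.liftAlgHom_root _ _ _ _

theorem exists_padicInt_of_isIntegral {q : ℚ_[2]}
    (h : IsIntegral ℤ_[2] (algebraMap ℚ_[2] (Kd d) q)) : ∃ z : ℤ_[2], (z : ℚ_[2]) = q := by
  refine IsIntegrallyClosed.isIntegral_iff.mp ?_
  obtain ⟨P, hPm, hP⟩ := h
  refine ⟨P, hPm, (algebraMap ℚ_[2] (Kd d)).injective ?_⟩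
  rw [hom_eval₂, map_zero]
  exact hP

theorem isIntegral_conj {x : Kd d} (hx : IsIntegral ℤ_[2] x) : IsIntegral ℤ_[2] (conj d x) :=
  hx.map_of_comp_eq (RingHom.id ℤ_[2]) (conj d : Kd d →+* Kd d)
    (RingHom.ext fun z => ((conj d).commutes (z : ℚ_[2])).symm)

theorem not_isUnit_two : ¬ IsUnit (2 : integralClosure ℤ_[2] (Kd d)) := by
  rintro ⟨⟨_, z, h, -⟩, rfl⟩
  have h' : algebraMap ℚ_[2] (Kd d) 2 * z = 1 := by
    have := congrArg Subtype.val h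
    push_cast at this
    rwa [map_ofNat]
  have hz : (z : Kd d) = algebraMap ℚ_[2] (Kd d) 2⁻¹ := by
    rw [← mul_one (algebraMap ℚ_[2] (Kd d) 2⁻¹), ← h', ← mul_assoc, ← map_mul,
      inv_mul_cancel₀ two_ne_zero, map_one, one_mul]
  obtain ⟨Z, hZ⟩ := exists_padicInt_of_isIntegral (hz ▸ z.2)
  refine not_two_dvd_one ⟨Z, PadicInt.ext ?_⟩
  rw [PadicInt.coe_mul, hZ, PadicInt.coe_one, ← map_ofNat Coe.ringHom 2]
  exact (mul_inv_cancel₀ two_ne_zero).symm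

variable (D : ℤ_[2])

local notation "𝒪" => integralClosure ℤ_[2] (Kd D)

theorem isIntegral_sqrtd : IsIntegral ℤ_[2] (sqrtd (D : ℚ_[2])) :=
  ⟨X ^ 2 - C D, monic_X_pow_sub_C D two_ne_zero, by
    rw [eval₂_sub, eval₂_X_pow, eval₂_C, sqrtd_sq]
    exact sub_self _⟩

noncomputable def sqrtdO : 𝒪 := ⟨sqrtd _, isIntegral_sqrtd D⟩

theorem sqrtdO_sq : sqrtdO D ^ 2 = algebraMap ℤ_[2] _ D :=
  Subtype.ext sqrtd_sq

variable {D}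

theorem exists_eq_algebraMap_add_mul_sqrtdO (hD : 4 ∣ D + 1) (x : 𝒪) :
    ∃ A B : ℤ_[2], x = algebraMap ℤ_[2] _ A + algebraMap ℤ_[2] _ B * sqrtdO D := by
  -- the trace `2a` and the norm `a² - Db²` lie in `ℤ₂`, and `D ≡ -1 mod 4` forces `2 ∣ 2a, 2b`
  set ι := algebraMap ℚ_[2] (Kd D)
  obtain ⟨a, b, hx⟩ := exists_eq_add_mul_sqrtd (x : Kd D)
  have hconj : conj _ (x : Kd D) = ι a - ι b * sqrtd _ := by
    rw [hx, map_add, map_mul, AlgHom.commutes, AlgHom.commutes, conj_sqrtd]; ring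
  obtain ⟨T, hT⟩ : ∃ T : ℤ_[2], (T : ℚ_[2]) = 2 * a := by
    refine exists_padicInt_of_isIntegral (d := D) ?_
    rw [show ι (2 * a) = (x : Kd D) + conj _ x by rw [hconj, hx, map_mul, map_ofNat]; ring]
    exact x.2.add (isIntegral_conj x.2)
  obtain ⟨N, hN⟩ : ∃ N : ℤ_[2], (N : ℚ_[2]) = a ^ 2 - D * b ^ 2 := by
    refine exists_padicInt_of_isIntegral (d := D) ?_
    rw [show ι (a ^ 2 - D * b ^ 2) = (x : Kd D) * conj _ x by
      rw [hconj, hx, map_sub, map_mul, map_pow, map_pow]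
      linear_combination (ι b) ^ 2 * sqrtd_sq]
    exact x.2.mul (isIntegral_conj x.2)
  have hDu : IsUnit D := isUnit_of_not_two_dvd fun h =>
    not_two_dvd_one ((dvd_sub (dvd_trans ⟨2, by norm_num⟩ hD) h).trans (by simp))
  have hb : ‖2 * b‖ ≤ 1 := by
    have key : (2 * b) ^ 2 * (D : ℚ_[2]) = ((T ^ 2 - 4 * N : ℤ_[2]) : ℚ_[2]) := by
      push_cast; rw [hT, hN]; ring
    have : ‖2 * b‖ ^ 2 = ‖((T ^ 2 - 4 * N : ℤ_[2]) : ℚ_[2])‖ := by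
      rw [← key, norm_mul _ (D : ℚ_[2]), norm_pow, padic_norm_e_of_padicInt, isUnit_iff.1 hDu,
        mul_one]
    rw [← pow_le_one_iff_of_nonneg (norm_nonneg _) two_ne_zero, this, padic_norm_e_of_padicInt]
    exact norm_le_one _
  set S : ℤ_[2] := ⟨2 * b, hb⟩
  have hS : (S : ℚ_[2]) = 2 * b := rfl
  obtain ⟨⟨A, hA⟩, ⟨B, hB⟩⟩ := two_dvd_of_four_dvd_sq_sub_mul_sq (B := S) hD
    ⟨N, PadicInt.ext (by push_cast; rw [hT, hN, hS]; ring)⟩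
  have ha : (A : ℚ_[2]) = a := mul_left_cancel₀ (two_ne_zero' ℚ_[2]) <| by
    rw [← hT, hA, PadicInt.coe_mul, PadicInt.coe_ofNat]
  have hb : (B : ℚ_[2]) = b := mul_left_cancel₀ (two_ne_zero' ℚ_[2]) <| by
    rw [← hS, hB, PadicInt.coe_mul, PadicInt.coe_ofNat]
  refine ⟨A, B, Subtype.ext ?_⟩
  rw [hx, ← ha, ← hb]
  rfl

theorem exists_isUnit_sq_one_add_sqrtdO_eq_two_mul (hD : 4 ∣ D + 1) :
    ∃ v : 𝒪, IsUnit v ∧ (1 + sqrtdO D) ^ 2 = 2 * v := by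
  obtain ⟨k, hk⟩ := hD
  set K := algebraMap ℤ_[2] 𝒪 k
  have hk' : algebraMap ℤ_[2] _ D + 1 = 4 * K := by
    have := congrArg (algebraMap ℤ_[2] 𝒪) hk
    rwa [map_add, map_one, map_mul, map_ofNat] at this
  refine ⟨sqrtdO D + 2 * K, isUnit_of_mul_isUnit_left (y := 2 * K - sqrtdO D) ?_, ?_⟩
  · have hodd : IsUnit (2 * k - 1) := isUnit_of_not_two_dvd fun ⟨c, hc⟩ =>
      not_two_dvd_one ⟨k - c, by linear_combination -hc⟩
    convert (hodd.pow 2).map (algebraMap ℤ_[2] 𝒪) using 1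
    simp only [map_pow, map_sub, map_mul, map_ofNat, map_one]
    linear_combination -sqrtdO_sq D - hk'
  · linear_combination sqrtdO_sq D + hk'

variable {π : integralClosure ℤ_[2] (Kd D)}

theorem dvd_one_add_sqrtdO (hD : 4 ∣ D + 1) (hmax : ∀ x, ¬ IsUnit x → π ∣ x) :
    π ∣ 1 + sqrtdO D := by
  obtain ⟨v, -, hv⟩ := exists_isUnit_sq_one_add_sqrtdO_eq_two_mul hD
  exact hmax _ fun h => not_isUnit_two (isUnit_of_mul_isUnit_left (hv ▸ h.pow 2))

theorem sq_dvd_two (hD : 4 ∣ D + 1) (hmax : ∀ x, ¬ IsUnit x → π ∣ x) : π ^ 2 ∣ 2 := by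
  obtain ⟨v, hv, hsq⟩ := exists_isUnit_sq_one_add_sqrtdO_eq_two_mul hD
  calc π ^ 2 ∣ (1 + sqrtdO D) ^ 2 := pow_dvd_pow_of_dvd (dvd_one_add_sqrtdO hD hmax) 2
    _ = 2 * v := hsq
    _ ∣ 2 := hv.mul_right_dvd.2 dvd_rfl

theorem dvd_or_dvd_sub_one (hD : 4 ∣ D + 1) (hmax : ∀ x, ¬ IsUnit x → π ∣ x)
    (x : 𝒪) : π ∣ x ∨ π ∣ x - 1 := by
  obtain ⟨A, B, rfl⟩ := exists_eq_algebraMap_add_mul_sqrtdO hD x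
  have h2 : π ∣ algebraMap ℤ_[2] 𝒪 2 := (map_ofNat (algebraMap ℤ_[2] 𝒪) 2).symm ▸
    (dvd_pow_self π two_ne_zero).trans (sq_dvd_two hD hmax)
  have hB : π ∣ algebraMap ℤ_[2] _ B * (1 + sqrtdO D) := (dvd_one_add_sqrtdO hD hmax).mul_left _
  have hx : algebraMap ℤ_[2] _ A + algebraMap ℤ_[2] _ B * sqrtdO D
      = algebraMap ℤ_[2] _ (A - B) + algebraMap ℤ_[2] _ B * (1 + sqrtdO D) := by
    rw [map_sub]; ring
  rw [hx, add_sub_right_comm]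
  rcases two_dvd_or_two_dvd_sub_one (A - B) with h | h
  · exact .inl (dvd_add (h2.trans (map_dvd _ h)) hB)
  · have h' := map_dvd (algebraMap ℤ_[2] 𝒪) h
    rw [map_sub, map_one] at h'
    exact .inr (dvd_add (h2.trans h') hB)

end Kd

/-- d-contraction: two units with different `π`-coefficients contract to a variable one
level higher, with prescribed `π`-coefficient `ε`. -/
theorem stmt3 (d : ℚ_[2]) (hd : d = -1 ∨ d = -5) (π : Kd d) (hπ : IsUniformizerO π)
    (u w : Kd d) (hu : isUnitO u) (hw : isUnitO w) (huw : ¬ pdvd π 2 (u - w)) (ε : Fin 2) :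
    ∃ α β t : Kd d, inO α ∧ inO β ∧ ¬ (pdvd π 1 α ∧ pdvd π 1 β) ∧
      isUnitO t ∧ u * α ^ 6 + w * β ^ 6 = π * t ∧
      pdvd π 2 (t - (1 + ((ε : ℕ) : Kd d) * π)) := by
  obtain ⟨D, rfl, hD⟩ : ∃ D : ℤ_[2], (D : ℚ_[2]) = d ∧ 4 ∣ D + 1 := by
    rcases hd with rfl | rfl
    · exact ⟨-1, by push_cast; rfl, by norm_num⟩
    · exact ⟨-5, by push_cast; rfl, ⟨-1, by norm_num⟩⟩
  lift π to integralClosure ℤ_[2] (Kd D) using hπ.1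
  lift u to integralClosure ℤ_[2] (Kd D) using hu.1
  lift w to integralClosure ℤ_[2] (Kd D) using hw.1
  obtain ⟨hπu, hmax⟩ := hπ.of_coe
  rw [← Subalgebra.coe_sub, pdvd_coe_iff] at huw
  obtain ⟨α, β, t, hαβ, ht, heq, htε⟩ := exists_contraction hπu hmax
    (Kd.dvd_or_dvd_sub_one hD hmax) (Kd.sq_dvd_two hD hmax)
    (isUnitO_coe_iff.1 hu) (isUnitO_coe_iff.1 hw) huw ((ε : ℕ) : integralClosure ℤ_[2] (Kd D))
  refine ⟨α, β, t, α.2, β.2, by simpa only [pdvd_coe_iff, pow_one] using hαβ,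
    isUnitO_coe_iff.2 ht, by exact_mod_cast congrArg Subtype.val heq, ?_⟩
  rw [← pdvd_coe_iff] at htε
  simpa using htε
end

section
/- Let 𝒪 be a complete discrete valuation ring with uniformizer π and residue field of size 2, and let v be the normalized valuation. Suppose b₁, b₂ ∈ 𝒪 are nonzero with v(b₁) = v(b₂) = k, and for each j with k+1 ≤ j ≤ k+t-1 there is a nonzero element cⱼ ∈ 𝒪 with v(cⱼ) = j. Then by repeatedly replacing two elements of equal valuation m by an element of the form b α⁶ + b' β⁶ (α, β not both in (π)) of valuation ≥ m+1, one obtains an element of valuation at least k+t. -/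
/-- One state of the slide process is obtained from another by replacing two elements of
equal valuation `m` by a contraction `b * α ^ 6 + b' * β ^ 6` (with `α, β` not both in
`(π)`) of valuation at least `m + 1`. -/
inductive Slide {R : Type*} [CommRing R] (π : R) : Multiset R → Multiset R → Prop
  | refl (S : Multiset R) : Slide π S S
  | step (S T : Multiset R) (m : ℕ) (b b' α β : R) :
      Slide π S (b ::ₘ b' ::ₘ T) →
      π ^ m ∣ b → ¬ π ^ (m + 1) ∣ b → π ^ m ∣ b' → ¬ π ^ (m + 1) ∣ b' →
      ¬ (π ∣ α ∧ π ∣ β) → π ^ (m + 1) ∣ (b * α ^ 6 + b' * β ^ 6) →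
      Slide π S ((b * α ^ 6 + b' * β ^ 6) ::ₘ T)

/-!
Since the residue field is `𝔽₂`, every unit is `≡ 1 (mod π)`, so the sum of two elements of
exact valuation `m` has valuation at least `m + 1`; this is a contraction with `α = β = 1`.
Starting from `b₁ + b₂`, walk up the levels `k + 1, …, k + t - 1`: at level `j` the current
element either already has valuation `> j`, or it has valuation exactly `j` and is contracted
with `c j`.
-/

section

variable {R : Type*} [CommRing R] {π : R}

theorem dvd_add_of_not_dvd_of_not_dvd (hres : ∀ x : R, π ∣ x ∨ π ∣ (x - 1)) {u v : R}
    (hu : ¬ π ∣ u) (hv : ¬ π ∣ v) : π ∣ u + v := by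
  have hu₁ : π ∣ u - 1 := (hres u).resolve_left hu
  refine (hres (u + v)).resolve_right fun huv₁ => hv ?_
  simpa using dvd_sub huv₁ hu₁

theorem pow_succ_dvd_add_of_exact (hres : ∀ x : R, π ∣ x ∨ π ∣ (x - 1)) {m : ℕ} {b b' : R}
    (hb : π ^ m ∣ b ∧ ¬ π ^ (m + 1) ∣ b) (hb' : π ^ m ∣ b' ∧ ¬ π ^ (m + 1) ∣ b') :
    π ^ (m + 1) ∣ b + b' := by
  obtain ⟨⟨u, rfl⟩, hnb⟩ := hb
  obtain ⟨⟨u', rfl⟩, hnb'⟩ := hb'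
  have hu : ¬ π ∣ u := fun h => hnb (by rw [pow_succ]; exact mul_dvd_mul_left _ h)
  have hu' : ¬ π ∣ u' := fun h => hnb' (by rw [pow_succ]; exact mul_dvd_mul_left _ h)
  rw [← mul_add, pow_succ]
  exact mul_dvd_mul_left _ (dvd_add_of_not_dvd_of_not_dvd hres hu hu')

theorem Slide.add (hres : ∀ x : R, π ∣ x ∨ π ∣ (x - 1)) {S T : Multiset R} {m : ℕ} {b b' : R}
    (h : Slide π S (b ::ₘ b' ::ₘ T)) (hb : π ^ m ∣ b ∧ ¬ π ^ (m + 1) ∣ b)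
    (hb' : π ^ m ∣ b' ∧ ¬ π ^ (m + 1) ∣ b') : Slide π S ((b + b') ::ₘ T) := by
  have hπ : ¬ (π ∣ 1 ∧ π ∣ 1) := fun ⟨h1, _⟩ =>
    hb.2 ((pow_dvd_pow_of_dvd h1 (m + 1)).trans (by simp))
  simpa using h.step S T m b b' 1 1 hb.1 hb.2 hb'.1 hb'.2 hπ
    (by simpa using pow_succ_dvd_add_of_exact hres hb hb')

theorem Slide.exists_pow_dvd_of_Ioc (hres : ∀ x : R, π ∣ x ∨ π ∣ (x - 1)) {S T : Multiset R}
    {c : ℕ → R} {j n : ℕ} {z : R} (h : Slide π S (z ::ₘ ((Finset.Ioc j n).val.map c + T)))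
    (hz : π ^ (j + 1) ∣ z) (hc : ∀ i ∈ Finset.Ioc j n, π ^ i ∣ c i ∧ ¬ π ^ (i + 1) ∣ c i) :
    ∃ (T' : Multiset R) (z' : R), Slide π S T' ∧ z' ∈ T' ∧ π ^ (n + 1) ∣ z' := by
  rcases le_or_gt n j with hnj | hjn
  · exact ⟨_, z, h, Multiset.mem_cons_self _ _, (pow_dvd_pow π (by omega)).trans hz⟩
  have hIoc : Finset.Ioc j n = Finset.cons (j + 1) (Finset.Ioc (j + 1) n) (by simp) := by
    rw [← Finset.Icc_eq_cons_Ioc (by omega), Finset.Icc_add_one_left_eq_Ioc]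
  have hc' : ∀ i ∈ Finset.Ioc (j + 1) n, π ^ i ∣ c i ∧ ¬ π ^ (i + 1) ∣ c i := fun i hi =>
    hc i (Finset.Ioc_subset_Ioc_left (Nat.le_succ j) hi)
  have hnext := hc (j + 1) (by simp [hIoc])
  rw [hIoc, Finset.cons_val, Multiset.map_cons, Multiset.cons_add] at h
  by_cases hz' : π ^ (j + 1 + 1) ∣ z
  · rw [← Multiset.add_cons] at h
    exact Slide.exists_pow_dvd_of_Ioc hres h hz' hc'
  · exact Slide.exists_pow_dvd_of_Ioc hres (h.add hres ⟨hz, hz'⟩ hnext)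
      (pow_succ_dvd_add_of_exact hres ⟨hz, hz'⟩ hnext) hc'
termination_by n - j

end

theorem stmt19_general (R : Type*) [CommRing R]
    (π : R) (hres : ∀ x : R, π ∣ x ∨ π ∣ (x - 1))
    (k t : ℕ) (b₁ b₂ : R)
    (hb₁ : π ^ k ∣ b₁ ∧ ¬ π ^ (k + 1) ∣ b₁) (hb₂ : π ^ k ∣ b₂ ∧ ¬ π ^ (k + 1) ∣ b₂)
    (c : ℕ → R) (hc : ∀ j ∈ Finset.Ioc k (k + t - 1), π ^ j ∣ c j ∧ ¬ π ^ (j + 1) ∣ c j) :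
    ∃ (T : Multiset R) (z : R),
      Slide π (b₁ ::ₘ b₂ ::ₘ (Finset.Ioc k (k + t - 1)).val.map c) T ∧
      z ∈ T ∧ π ^ (k + t) ∣ z := by
  have hstart := (Slide.refl (π := π)
    (b₁ ::ₘ b₂ ::ₘ ((Finset.Ioc k (k + t - 1)).val.map c + 0))).add hres hb₁ hb₂
  obtain ⟨T, z, hT, hzT, hz⟩ :=
    Slide.exists_pow_dvd_of_Ioc hres hstart (pow_succ_dvd_add_of_exact hres hb₁ hb₂) hc
  exact ⟨T, z, by simpa using hT, hzT, (pow_dvd_pow π (by omega)).trans hz⟩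

/-- The slide lemma: in a complete DVR with residue field of size `2`, starting from two
elements of valuation `k` and one element of valuation `j` for each `k+1 ≤ j ≤ k+t-1`,
repeated contraction of two elements of equal valuation produces an element of
valuation at least `k + t`. -/
theorem stmt19 (R : Type*) [CommRing R] [IsDomain R] [IsDiscreteValuationRing R]
    [IsAdicComplete (IsLocalRing.maximalIdeal R) R]
    (π : R) (hπ : Irreducible π) (hres : ∀ x : R, π ∣ x ∨ π ∣ (x - 1))
    (k t : ℕ) (b₁ b₂ : R)
    (hb₁ : π ^ k ∣ b₁ ∧ ¬ π ^ (k + 1) ∣ b₁) (hb₂ : π ^ k ∣ b₂ ∧ ¬ π ^ (k + 1) ∣ b₂)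
    (c : ℕ → R) (hc : ∀ j ∈ Finset.Ioc k (k + t - 1), π ^ j ∣ c j ∧ ¬ π ^ (j + 1) ∣ c j) :
    ∃ (T : Multiset R) (z : R),
      Slide π (b₁ ::ₘ b₂ ::ₘ (Finset.Ioc k (k + t - 1)).val.map c) T ∧
      z ∈ T ∧ π ^ (k + t) ∣ z :=
  stmt19_general R π hres k t b₁ b₂ hb₁ hb₂ c hc
end
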